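/- arXiv:1704.02909 — 3 statements merged into one kernel-verified Lean document; each statement's English description precedes it below -/
import Mathlib

section
/- Let γ ∈ SL(2,ℝ) act on ℝ ∪ {∞} by the Möbius transformation γ(x) = (ax+b)/(cx+d), and let I, J ⊂ ℝ be compact intervals with γ(I) = J. Then for all x, y ∈ I: e^{−|α(γ,I)|}·|J|/|I| ≤ γ'(x) ≤ e^{|α(γ,I)|}·|J|/|I|, and γ'(x)/γ'(y) ≤ exp(2 e^{|α(γ,I)|} · |x − y|/|I|). -/
open Set Real

noncomputable section

abbrev SL2 := Matrix.SpecialLinearGroup (Fin 2) ℝ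

/-- The Möbius transformation of `ℝ` associated to `g ∈ SL(2,ℝ)` (junk value at the pole). -/
def mobius (g : SL2) (x : ℝ) : ℝ :=
  (g 0 0 * x + g 0 1) / (g 1 0 * x + g 1 1)

/-- The derivative `γ'(x) = (cx+d)⁻²` of the Möbius transformation. -/
def mobiusDeriv (g : SL2) (x : ℝ) : ℝ :=
  ((g 1 0 * x + g 1 1) ^ 2)⁻¹

/-- The pole `γ⁻¹(∞) = -d/c` of `γ = [[a,b],[c,d]]`. -/
def mobiusPole (g : SL2) : ℝ := -(g 1 1) / (g 1 0)

/-- The distortion factor `α(γ, [x₀,x₁]) = log((γ⁻¹(∞) − x₁)/(γ⁻¹(∞) − x₀))`,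
with the convention `α = 0` when `γ⁻¹(∞) = ∞` (i.e. `c = 0`). -/
def alphaDist (g : SL2) (x₀ x₁ : ℝ) : ℝ :=
  if g 1 0 = 0 then 0 else Real.log ((mobiusPole g - x₁) / (mobiusPole g - x₀))

/-! Write `u x = c x + d`. It has no zero on `I`, hence constant sign, and
`γ x - γ y = (x - y) / (u x u y)`; so `γ` increases, `J = [γ x₀, γ x₁]` and
`|J| / |I| = 1 / (u x₀ u x₁) = 1 / (m M)`, where `m ≤ M` are the values of `|u|` at the endpoints.
Also `e^{|α|} = M / m`, and `|u|` is affine on `I`, so `m ≤ |u| ≤ M` there; as `γ' = u⁻²` this gives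
`e^{-|α|} |J| / |I| = 1 / M² ≤ γ' ≤ 1 / m² = e^{|α|} |J| / |I|`.
For the distortion, `|c| |I| = |u x₁ - u x₀| ≤ M`, so
`|u y| ≤ |u x| + |c| |x - y| ≤ |u x| (1 + e^{|α|} |x - y| / |I|)`, and `1 + t ≤ eᵗ`. -/

lemma mul_pos_of_continuousOn_Icc_of_ne_zero {α : Type*} [ConditionallyCompleteLinearOrder α]
    [TopologicalSpace α] [OrderTopology α] [DenselyOrdered α] {f : α → ℝ} {a b x y : α}
    (hf : ContinuousOn f (Icc a b)) (hf0 : ∀ z ∈ Icc a b, f z ≠ 0)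
    (hx : x ∈ Icc a b) (hy : y ∈ Icc a b) : 0 < f x * f y := by
  by_contra! hle
  have h0 : (0 : ℝ) ∈ uIcc (f x) (f y) := by
    rcases mul_nonpos_iff.mp hle with ⟨h1, h2⟩ | ⟨h1, h2⟩
    exacts [mem_uIcc_of_ge h2 h1, mem_uIcc_of_le h1 h2]
  obtain ⟨z, hz, hz0⟩ := intermediate_value_uIcc (hf.mono (uIcc_subset_Icc hx hy)) h0
  exact hf0 z (uIcc_subset_Icc hx hy hz) hz0

lemma abs_mem_uIcc_abs {a b z : ℝ} (hab : 0 < a * b) (hz : z ∈ uIcc a b) : |z| ∈ uIcc |a| |b| := by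
  rcases pos_and_pos_or_neg_and_neg_of_mul_pos hab with ⟨ha, hb⟩ | ⟨ha, hb⟩
  · rwa [abs_of_pos ha, abs_of_pos hb, abs_of_pos ((lt_min ha hb).trans_le hz.1)]
  · rw [abs_of_neg ha, abs_of_neg hb, abs_of_neg (hz.2.trans_lt (max_lt ha hb)), ← image_neg_uIcc]
    exact mem_image_of_mem _ hz

lemma abs_sub_le_max_abs_abs {a b : ℝ} (hab : 0 < a * b) : |a - b| ≤ max |a| |b| := by
  rcases pos_and_pos_or_neg_and_neg_of_mul_pos hab with ⟨ha, hb⟩ | ⟨ha, hb⟩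
  · rw [abs_of_pos ha, abs_of_pos hb]
    exact abs_sub_le_of_nonneg_of_le ha.le (le_max_left _ _) hb.le (le_max_right _ _)
  · rw [abs_of_neg ha, abs_of_neg hb, show a - b = -b - -a by ring]
    exact abs_sub_le_of_nonneg_of_le (neg_nonneg.2 hb.le) (le_max_right _ _)
      (neg_nonneg.2 ha.le) (le_max_left _ _)

lemma mul_add_mem_uIcc {c d x x₀ x₁ : ℝ} (hx : x ∈ uIcc x₀ x₁) :
    c * x + d ∈ uIcc (c * x₀ + d) (c * x₁ + d) := by
  have := mem_image_of_mem (· + d) (mem_image_of_mem (c * ·) hx)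
  rwa [image_const_mul_uIcc, image_add_const_uIcc] at this

lemma sq_mul_add_le_mul_exp {c d x y ℓ K : ℝ} (hℓ : 0 < ℓ) (hc : |c| * ℓ ≤ K * |c * x + d|) :
    (c * y + d) ^ 2 ≤ (c * x + d) ^ 2 * exp (2 * K * |x - y| / ℓ) := by
  set E := K * |x - y| / ℓ with hE
  have hslope : |c| * |x - y| ≤ |c * x + d| * E :=
    calc |c| * |x - y| = |c| * ℓ * (|x - y| / ℓ) := by field_simp
      _ ≤ K * |c * x + d| * (|x - y| / ℓ) := by gcongr
      _ = |c * x + d| * E := by rw [hE]; ring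
  have hy : |c * y + d| ≤ |c * x + d| * exp E :=
    calc |c * y + d| = |(c * x + d) - c * (x - y)| := by ring_nf
      _ ≤ |c * x + d| + |c| * |x - y| := by rw [← abs_mul]; exact abs_sub _ _
      _ ≤ |c * x + d| * (1 + E) := by linarith
      _ ≤ |c * x + d| * exp E := by gcongr; linarith [add_one_le_exp E]
  calc (c * y + d) ^ 2 = |c * y + d| ^ 2 := (sq_abs _).symm
    _ ≤ (|c * x + d| * exp E) ^ 2 := by gcongr
    _ = (c * x + d) ^ 2 * exp (2 * K * |x - y| / ℓ) := by
      rw [mul_pow, sq_abs, ← exp_nat_mul, hE]; push_cast; ring_nf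

lemma exp_abs_log_div {p q : ℝ} (hp : 0 < p) (hq : 0 < q) :
    exp |log (q / p)| = max p q / min p q := by
  rcases le_total p q with h | h
  · rw [abs_of_nonneg (log_nonneg ((one_le_div hp).2 h)), exp_log (div_pos hq hp),
      max_eq_right h, min_eq_left h]
  · rw [abs_of_nonpos (log_nonpos (div_nonneg hq.le hp.le) ((div_le_one hp).2 h)), exp_neg,
      exp_log (div_pos hq hp), inv_div, max_eq_left h, min_eq_right h]

lemma abs_mul_sub_le_max {c d x₀ x₁ : ℝ} (hI : x₀ ≤ x₁) (hpos : 0 < (c * x₀ + d) * (c * x₁ + d)) :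
    |c| * (x₁ - x₀) ≤ max |c * x₀ + d| |c * x₁ + d| := by
  rw [← abs_of_nonneg (sub_nonneg.2 hI), ← abs_mul, ← abs_neg, show -(c * (x₁ - x₀)) =
    (c * x₀ + d) - (c * x₁ + d) by ring]
  exact abs_sub_le_max_abs_abs hpos

section Mobius

variable {g : SL2} {x₀ x₁ : ℝ}

lemma mobius_sub_mobius {x y : ℝ} (hx : g 1 0 * x + g 1 1 ≠ 0) (hy : g 1 0 * y + g 1 1 ≠ 0) :
    mobius g x - mobius g y = (x - y) / ((g 1 0 * x + g 1 1) * (g 1 0 * y + g 1 1)) := by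
  have hdet : g 0 0 * g 1 1 - g 0 1 * g 1 0 = 1 := by
    rw [← Matrix.det_fin_two]; exact g.det_coe
  rw [mobius, mobius, div_sub_div _ _ hx hy]
  congr 1
  linear_combination (x - y) * hdet

lemma continuousOn_mobius {s : Set ℝ} (hpole : ∀ x ∈ s, g 1 0 * x + g 1 1 ≠ 0) :
    ContinuousOn (mobius g) s :=
  ContinuousOn.div (by fun_prop) (by fun_prop) hpole

lemma denom_mul_pos (hpole : ∀ x ∈ Icc x₀ x₁, g 1 0 * x + g 1 1 ≠ 0) {x y : ℝ}
    (hx : x ∈ Icc x₀ x₁) (hy : y ∈ Icc x₀ x₁) :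
    0 < (g 1 0 * x + g 1 1) * (g 1 0 * y + g 1 1) :=
  mul_pos_of_continuousOn_Icc_of_ne_zero (f := fun x ↦ g 1 0 * x + g 1 1) (by fun_prop) hpole hx hy

lemma strictMonoOn_mobius (hpole : ∀ x ∈ Icc x₀ x₁, g 1 0 * x + g 1 1 ≠ 0) :
    StrictMonoOn (mobius g) (Icc x₀ x₁) := fun x hx y hy hxy ↦ by
  have := mobius_sub_mobius (hpole y hy) (hpole x hx)
  have := div_pos (sub_pos.2 hxy) (denom_mul_pos hpole hy hx)
  linarith

lemma mobius_image_Icc (hI : x₀ ≤ x₁) (hpole : ∀ x ∈ Icc x₀ x₁, g 1 0 * x + g 1 1 ≠ 0) :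
    mobius g '' Icc x₀ x₁ = Icc (mobius g x₀) (mobius g x₁) :=
  (continuousOn_mobius hpole).image_Icc_of_monotoneOn hI (strictMonoOn_mobius hpole).monotoneOn

lemma alphaDist_eq_log (h₀ : g 1 0 * x₀ + g 1 1 ≠ 0) :
    alphaDist g x₀ x₁ = log ((g 1 0 * x₁ + g 1 1) / (g 1 0 * x₀ + g 1 1)) := by
  by_cases hc : g 1 0 = 0
  · simp_all [alphaDist]
  · have hpole : ∀ x, mobiusPole g - x = -(g 1 0 * x + g 1 1) / g 1 0 := fun x ↦ by
      rw [mobiusPole]; field_simp; ring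
    rw [alphaDist, if_neg hc, hpole, hpole, div_div_div_cancel_right₀ hc, neg_div_neg_eq]

lemma exp_abs_alphaDist (h₀ : g 1 0 * x₀ + g 1 1 ≠ 0) (h₁ : g 1 0 * x₁ + g 1 1 ≠ 0) :
    exp |alphaDist g x₀ x₁| =
      max |g 1 0 * x₀ + g 1 1| |g 1 0 * x₁ + g 1 1| /
        min |g 1 0 * x₀ + g 1 1| |g 1 0 * x₁ + g 1 1| := by
  rw [alphaDist_eq_log h₀, ← log_abs, abs_div, exp_abs_log_div (abs_pos.2 h₀) (abs_pos.2 h₁)]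

lemma slope_of_mobius_image_Icc {y₀ y₁ : ℝ} (hI : x₀ < x₁)
    (hpole : ∀ x ∈ Icc x₀ x₁, g 1 0 * x + g 1 1 ≠ 0)
    (him : mobius g '' Icc x₀ x₁ = Icc y₀ y₁) :
    (y₁ - y₀) / (x₁ - x₀) = ((g 1 0 * x₀ + g 1 1) * (g 1 0 * x₁ + g 1 1))⁻¹ := by
  have hx₀ : x₀ ∈ Icc x₀ x₁ := left_mem_Icc.2 hI.le
  have hx₁ : x₁ ∈ Icc x₀ x₁ := right_mem_Icc.2 hI.le
  rw [mobius_image_Icc hI.le hpole,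
    Icc_eq_Icc_iff ((strictMonoOn_mobius hpole).monotoneOn hx₀ hx₁ hI.le)] at him
  rw [← him.1, ← him.2, mobius_sub_mobius (hpole x₁ hx₁) (hpole x₀ hx₀),
    div_div, mul_comm (g 1 0 * x₁ + g 1 1), div_mul_cancel_right₀ (sub_ne_zero.2 hI.ne')]

end Mobius

/-- **Derivative bounds via the distortion factor.**
If `γ ∈ SL(2,ℝ)` maps the compact interval `I = [x₀,x₁]` (containing no pole of `γ`)
onto `J = [y₀,y₁] ⊂ ℝ`, then for all `x, y ∈ I`:
`e^{-|α(γ,I)|}·|J|/|I| ≤ γ'(x) ≤ e^{|α(γ,I)|}·|J|/|I|` and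
`γ'(x)/γ'(y) ≤ exp(2 e^{|α(γ,I)|}·|x−y|/|I|)`. -/
theorem mobius_derivative_distortion (g : SL2) (x₀ x₁ y₀ y₁ : ℝ) (hI : x₀ < x₁)
    (hpole : ∀ x ∈ Icc x₀ x₁, g 1 0 * x + g 1 1 ≠ 0)
    (him : mobius g '' Icc x₀ x₁ = Icc y₀ y₁) :
    ∀ x ∈ Icc x₀ x₁, ∀ y ∈ Icc x₀ x₁,
      Real.exp (-|alphaDist g x₀ x₁|) * ((y₁ - y₀) / (x₁ - x₀)) ≤ mobiusDeriv g x ∧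
      mobiusDeriv g x ≤ Real.exp |alphaDist g x₀ x₁| * ((y₁ - y₀) / (x₁ - x₀)) ∧
      mobiusDeriv g x / mobiusDeriv g y ≤
        Real.exp (2 * Real.exp |alphaDist g x₀ x₁| * |x - y| / (x₁ - x₀)) := by
  intro x hx y hy
  have hx₀ : x₀ ∈ Icc x₀ x₁ := left_mem_Icc.2 hI.le
  have hx₁ : x₁ ∈ Icc x₀ x₁ := right_mem_Icc.2 hI.le
  have hpos := denom_mul_pos hpole hx₀ hx₁
  set m := min |g 1 0 * x₀ + g 1 1| |g 1 0 * x₁ + g 1 1|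
  set M := max |g 1 0 * x₀ + g 1 1| |g 1 0 * x₁ + g 1 1|
  have hm : 0 < m := lt_min (abs_pos.2 (hpole x₀ hx₀)) (abs_pos.2 (hpole x₁ hx₁))
  have hM : 0 < M := hm.trans_le min_le_max
  have hmM : m * M = (g 1 0 * x₀ + g 1 1) * (g 1 0 * x₁ + g 1 1) := by
    rw [min_mul_max, ← abs_mul, abs_of_pos hpos]
  have hα : exp |alphaDist g x₀ x₁| = M / m := exp_abs_alphaDist (hpole x₀ hx₀) (hpole x₁ hx₁)
  have hslope := slope_of_mobius_image_Icc hI hpole him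
  have hux : |g 1 0 * x + g 1 1| ∈ uIcc |g 1 0 * x₀ + g 1 1| |g 1 0 * x₁ + g 1 1| :=
    abs_mem_uIcc_abs hpos (mul_add_mem_uIcc (Icc_subset_uIcc hx))
  have hux_pos : 0 < |g 1 0 * x + g 1 1| := abs_pos.2 (hpole x hx)
  refine ⟨?_, ?_, ?_⟩
  · calc exp (-|alphaDist g x₀ x₁|) * ((y₁ - y₀) / (x₁ - x₀)) = (M ^ 2)⁻¹ := by
          rw [exp_neg, hα, hslope, ← hmM]; field_simp
      _ ≤ mobiusDeriv g x := by
          rw [mobiusDeriv, ← sq_abs (g 1 0 * x + g 1 1)]; gcongr; exact hux.2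
  · calc mobiusDeriv g x ≤ (m ^ 2)⁻¹ := by
          rw [mobiusDeriv, ← sq_abs (g 1 0 * x + g 1 1)]; gcongr; exact hux.1
      _ = exp |alphaDist g x₀ x₁| * ((y₁ - y₀) / (x₁ - x₀)) := by
          rw [hα, hslope, ← hmM]; field_simp
  · rw [mobiusDeriv, mobiusDeriv, inv_div_inv, div_le_iff₀' (sq_pos_of_ne_zero (hpole x hx))]
    refine sq_mul_add_le_mul_exp (sub_pos.2 hI) ?_
    calc |g 1 0| * (x₁ - x₀) ≤ M := abs_mul_sub_le_max hI.le hpos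
      _ = exp |alphaDist g x₀ x₁| * m := by rw [hα, div_mul_cancel₀ _ hm.ne']
      _ ≤ exp |alphaDist g x₀ x₁| * |g 1 0 * x + g 1 1| := by gcongr; exact hux.1

end
end

section
/- Let γ₁, γ₂ ∈ SL(2,ℝ) act on ℝ ∪ {∞} by Möbius transformations, and let I, J₁, J₂ ⊂ ℝ be compact intervals with γ_j(I) = J_j for j = 1, 2. Let L ⊂ ℝ be a bounded interval, write α_j := α(γ_j, I), and assume α₁ ≠ α₂. Then the set {x ∈ I : log(γ₁'(x)/γ₂'(x)) ∈ L} is contained in an interval of length at most e^{|α₁| + |α₂|} · |I| · |L| / |α₁ − α₂|. -/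
open Set Real

noncomputable section

/-! Write `uⱼ x = cⱼ x + dⱼ`. Then `log (γ₁'/γ₂') = 2 φ` with `φ = log |u₂| - log |u₁|`,
`αⱼ = log |uⱼ x₁ / uⱼ x₀|`, and `φ' = (c₂ d₁ - c₁ d₂) / (u₁ u₂)`. An affine function without zeros
on `I` has constant sign there, so `|uⱼ|` varies on `I` by a factor at most `e^{|αⱼ|}` and `|φ'|` by a
factor at most `e^{|α₁| + |α₂|}`. By the mean value theorem `|φ'|` takes the value `|α₁ - α₂| / |I|`
somewhere on `I`, so `φ` expands distances on `I` by at least `e^{-|α₁|-|α₂|} |α₁ - α₂| / |I|`. -/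

lemma mul_pos_of_continuousOn_Icc_of_ne_zero_s6 {f : ℝ → ℝ} {a b : ℝ} (hab : a ≤ b)
    (hf : ContinuousOn f (Icc a b)) (h0 : ∀ x ∈ Icc a b, f x ≠ 0) : 0 < f a * f b := by
  by_contra! h
  have hmem : (0 : ℝ) ∈ uIcc (f a) (f b) := by
    rcases mul_nonpos_iff.1 h with ⟨ha, hb⟩ | ⟨ha, hb⟩
    · exact mem_uIcc_of_ge hb ha
    · exact mem_uIcc_of_le ha hb
  rw [← uIcc_of_le hab] at hf h0
  obtain ⟨x, hx, hfx⟩ := intermediate_value_uIcc hf hmem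
  exact h0 x hx hfx

lemma affine_mem_uIcc (c d : ℝ) {a b x : ℝ} (hx : x ∈ Icc a b) :
    c * x + d ∈ uIcc (c * a + d) (c * b + d) := by
  have hbetween : 0 ≤ (c * x + d - (c * a + d)) * (c * b + d - (c * x + d)) := by
    have : 0 ≤ c ^ 2 * ((x - a) * (b - x)) :=
      mul_nonneg (sq_nonneg c) (mul_nonneg (sub_nonneg.2 hx.1) (sub_nonneg.2 hx.2))
    linarith
  rcases mul_nonneg_iff.1 hbetween with ⟨h₁, h₂⟩ | ⟨h₁, h₂⟩
  · exact mem_uIcc_of_le (by linarith) (by linarith)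
  · exact mem_uIcc_of_ge (by linarith) (by linarith)

lemma abs_mem_uIcc_abs_s6 {p q v : ℝ} (hpq : 0 < p * q) (hv : v ∈ uIcc p q) :
    |v| ∈ uIcc |p| |q| := by
  rw [mem_uIcc] at hv ⊢
  rcases mul_pos_iff.1 hpq with ⟨hp, hq⟩ | ⟨hp, hq⟩
  · have hv0 : 0 < v := by rcases hv with h | h <;> linarith [h.1]
    rw [abs_of_pos hp, abs_of_pos hq, abs_of_pos hv0]
    exact hv
  · have hv0 : v < 0 := by rcases hv with h | h <;> linarith [h.2]
    rw [abs_of_neg hp, abs_of_neg hq, abs_of_neg hv0]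
    rcases hv with h | h
    · exact Or.inr ⟨by linarith [h.2], by linarith [h.1]⟩
    · exact Or.inl ⟨by linarith [h.2], by linarith [h.1]⟩

lemma le_exp_abs_log_div_mul {p q s t : ℝ} (hp : 0 < p) (hq : 0 < q)
    (hs : s ∈ uIcc p q) (ht : t ∈ uIcc p q) : s ≤ exp |log (q / p)| * t := by
  rcases le_total p q with hpq | hqp
  · rw [uIcc_of_le hpq] at hs ht
    calc s ≤ q / p * p := by rw [div_mul_cancel₀ q hp.ne']; exact hs.2
      _ ≤ exp |log (q / p)| * t := by
        gcongr
        · calc q / p = exp (log (q / p)) := (exp_log (div_pos hq hp)).symm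
            _ ≤ exp |log (q / p)| := exp_le_exp.2 (le_abs_self _)
        · exact ht.1
  · rw [uIcc_of_ge hqp] at hs ht
    calc s ≤ p / q * q := by rw [div_mul_cancel₀ p hq.ne']; exact hs.2
      _ ≤ exp |log (q / p)| * t := by
        gcongr
        · calc p / q = exp (-log (q / p)) := by rw [exp_neg, exp_log (div_pos hq hp), inv_div]
            _ ≤ exp |log (q / p)| := exp_le_exp.2 (neg_le_abs _)
        · exact ht.1

lemma abs_affine_le_exp_mul {c d a b x y : ℝ} (hab : a ≤ b)
    (h0 : ∀ z ∈ Icc a b, c * z + d ≠ 0) (hx : x ∈ Icc a b) (hy : y ∈ Icc a b) :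
    |c * x + d| ≤ exp |log ((c * b + d) / (c * a + d))| * |c * y + d| := by
  have hpq := mul_pos_of_continuousOn_Icc_of_ne_zero_s6 hab (by fun_prop) h0
  have h := le_exp_abs_log_div_mul (abs_pos.2 (h0 a (left_mem_Icc.2 hab)))
    (abs_pos.2 (h0 b (right_mem_Icc.2 hab)))
    (abs_mem_uIcc_abs_s6 hpq (affine_mem_uIcc c d hx)) (abs_mem_uIcc_abs_s6 hpq (affine_mem_uIcc c d hy))
  rwa [← abs_div, log_abs] at h

lemma alphaDist_eq_log_div (g : SL2) (x₀ x₁ : ℝ) :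
    alphaDist g x₀ x₁ = log ((g 1 0 * x₁ + g 1 1) / (g 1 0 * x₀ + g 1 1)) := by
  by_cases hc : g 1 0 = 0
  · have hd : g 1 1 ≠ 0 := by
      have hdet := g.det_coe
      rw [Matrix.det_fin_two, hc] at hdet
      rintro hd
      simp [hd] at hdet
    simp [alphaDist, hc, hd]
  · have hsub : ∀ x, mobiusPole g - x = -(g 1 0 * x + g 1 1) / g 1 0 := fun x => by
      rw [mobiusPole]; field_simp; ring
    rw [alphaDist, if_neg hc, hsub, hsub, div_div_div_cancel_right₀ hc, neg_div_neg_eq]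

lemma log_mobiusDeriv (g : SL2) (x : ℝ) :
    log (mobiusDeriv g x) = -2 * log (g 1 0 * x + g 1 1) := by
  rw [mobiusDeriv, log_inv, log_pow]; push_cast; ring

lemma mobiusDeriv_ne_zero {g : SL2} {x : ℝ} (h : g 1 0 * x + g 1 1 ≠ 0) :
    mobiusDeriv g x ≠ 0 :=
  inv_ne_zero (pow_ne_zero 2 h)

lemma abs_sub_mul_le_of_abs_deriv_le {φ φ' : ℝ → ℝ} {a b K x y : ℝ}
    (hφ : ∀ z ∈ Icc a b, HasDerivAt φ (φ' z) z)
    (hφ' : ∀ z ∈ Icc a b, ∀ w ∈ Icc a b, |φ' w| ≤ K * |φ' z|)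
    (hx : x ∈ Icc a b) (hy : y ∈ Icc a b) (hxy : x < y) :
    |φ b - φ a| * (y - x) ≤ K * (b - a) * |φ y - φ x| := by
  have hab : a < b := hx.1.trans_lt (hxy.trans_le hy.2)
  have hcont : ContinuousOn φ (Icc a b) := fun z hz => (hφ z hz).continuousAt.continuousWithinAt
  obtain ⟨ξ, hξ, hφξ⟩ := exists_hasDerivAt_eq_slope φ φ' hab hcont
    fun z hz => hφ z (Ioo_subset_Icc_self hz)
  have hsub : Icc x y ⊆ Icc a b := Icc_subset_Icc hx.1 hy.2
  obtain ⟨η, hη, hφη⟩ := exists_hasDerivAt_eq_slope φ φ' hxy (hcont.mono hsub)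
    fun z hz => hφ z (hsub (Ioo_subset_Icc_self hz))
  rw [eq_div_iff (sub_pos.2 hab).ne'] at hφξ
  rw [eq_div_iff (sub_pos.2 hxy).ne'] at hφη
  calc |φ b - φ a| * (y - x) = |φ' ξ| * ((b - a) * (y - x)) := by
        rw [← hφξ, abs_mul, abs_of_pos (sub_pos.2 hab)]; ring
    _ ≤ K * |φ' η| * ((b - a) * (y - x)) := by
        gcongr
        exact hφ' η (hsub (Ioo_subset_Icc_self hη)) ξ (Ioo_subset_Icc_self hξ)
    _ = K * (b - a) * |φ y - φ x| := by
        rw [← hφη, abs_mul, abs_of_pos (sub_pos.2 hxy)]; ring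

lemma abs_deriv_log_div_affine_le {c₁ d₁ c₂ d₂ a b z w : ℝ} (hab : a ≤ b)
    (h₁ : ∀ x ∈ Icc a b, c₁ * x + d₁ ≠ 0) (h₂ : ∀ x ∈ Icc a b, c₂ * x + d₂ ≠ 0)
    (hz : z ∈ Icc a b) (hw : w ∈ Icc a b) :
    |c₂ / (c₂ * w + d₂) - c₁ / (c₁ * w + d₁)| ≤
      exp (|log ((c₁ * b + d₁) / (c₁ * a + d₁))| + |log ((c₂ * b + d₂) / (c₂ * a + d₂))|) *
        |c₂ / (c₂ * z + d₂) - c₁ / (c₁ * z + d₁)| := by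
  have hD : ∀ x ∈ Icc a b, |c₂ / (c₂ * x + d₂) - c₁ / (c₁ * x + d₁)| *
      (|c₁ * x + d₁| * |c₂ * x + d₂|) = |c₂ * d₁ - c₁ * d₂| := fun x hx => by
    rw [← abs_mul, ← abs_mul]
    congr 1
    rw [div_sub_div _ _ (h₂ x hx) (h₁ x hx), mul_comm (c₁ * x + d₁),
      div_mul_cancel₀ _ (mul_ne_zero (h₂ x hx) (h₁ x hx))]
    ring
  have hw₀ : 0 < |c₁ * w + d₁| * |c₂ * w + d₂| :=
    mul_pos (abs_pos.2 (h₁ w hw)) (abs_pos.2 (h₂ w hw))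
  refine le_of_mul_le_mul_right ?_ hw₀
  calc |c₂ / (c₂ * w + d₂) - c₁ / (c₁ * w + d₁)| * (|c₁ * w + d₁| * |c₂ * w + d₂|)
      = |c₂ / (c₂ * z + d₂) - c₁ / (c₁ * z + d₁)| * (|c₁ * z + d₁| * |c₂ * z + d₂|) := by
        rw [hD w hw, hD z hz]
    _ ≤ |c₂ / (c₂ * z + d₂) - c₁ / (c₁ * z + d₁)| *
          ((exp |log ((c₁ * b + d₁) / (c₁ * a + d₁))| * |c₁ * w + d₁|) *
            (exp |log ((c₂ * b + d₂) / (c₂ * a + d₂))| * |c₂ * w + d₂|)) := by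
        gcongr
        · exact abs_affine_le_exp_mul hab h₁ hz hw
        · exact abs_affine_le_exp_mul hab h₂ hz hw
    _ = _ := by rw [exp_add]; ring

theorem two_mul_abs_alphaDist_sub_mul_le {g₁ g₂ : SL2} {x₀ x₁ x y : ℝ}
    (hpole₁ : ∀ x ∈ Icc x₀ x₁, g₁ 1 0 * x + g₁ 1 1 ≠ 0)
    (hpole₂ : ∀ x ∈ Icc x₀ x₁, g₂ 1 0 * x + g₂ 1 1 ≠ 0)
    (hx : x ∈ Icc x₀ x₁) (hy : y ∈ Icc x₀ x₁) (hxy : x < y) :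
    2 * |alphaDist g₁ x₀ x₁ - alphaDist g₂ x₀ x₁| * (y - x) ≤
      exp (|alphaDist g₁ x₀ x₁| + |alphaDist g₂ x₀ x₁|) * (x₁ - x₀) *
        |log (mobiusDeriv g₁ y / mobiusDeriv g₂ y) - log (mobiusDeriv g₁ x / mobiusDeriv g₂ x)| := by
  have h01 : x₀ ≤ x₁ := hx.1.trans hx.2
  set φ : ℝ → ℝ := fun z => log (g₂ 1 0 * z + g₂ 1 1) - log (g₁ 1 0 * z + g₁ 1 1)
  have hlog : ∀ z ∈ Icc x₀ x₁, log (mobiusDeriv g₁ z / mobiusDeriv g₂ z) = 2 * φ z := by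
    intro z hz
    rw [log_div (mobiusDeriv_ne_zero (hpole₁ z hz)) (mobiusDeriv_ne_zero (hpole₂ z hz)),
      log_mobiusDeriv, log_mobiusDeriv]
    ring
  have hends : φ x₁ - φ x₀ = alphaDist g₂ x₀ x₁ - alphaDist g₁ x₀ x₁ := by
    rw [alphaDist_eq_log_div, alphaDist_eq_log_div,
      log_div (hpole₁ x₁ (right_mem_Icc.2 h01)) (hpole₁ x₀ (left_mem_Icc.2 h01)),
      log_div (hpole₂ x₁ (right_mem_Icc.2 h01)) (hpole₂ x₀ (left_mem_Icc.2 h01))]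
    ring
  have hderiv : ∀ z ∈ Icc x₀ x₁, HasDerivAt φ
      (g₂ 1 0 / (g₂ 1 0 * z + g₂ 1 1) - g₁ 1 0 / (g₁ 1 0 * z + g₁ 1 1)) z := by
    intro z hz
    have hu : ∀ c d : ℝ, HasDerivAt (fun z => c * z + d) c z := fun c d => by
      simpa using ((hasDerivAt_id z).const_mul c).add_const d
    exact ((hu _ _).log (hpole₂ z hz)).sub ((hu _ _).log (hpole₁ z hz))
  have key := abs_sub_mul_le_of_abs_deriv_le hderiv
    (fun z hz w hw => abs_deriv_log_div_affine_le h01 hpole₁ hpole₂ hz hw) hx hy hxy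
  rw [hends, abs_sub_comm, ← alphaDist_eq_log_div, ← alphaDist_eq_log_div] at key
  rw [hlog y hy, hlog x hx, ← mul_sub, abs_mul, abs_two]
  linarith

lemma exists_Icc_of_forall_sub_le {S : Set ℝ} {r : ℝ} (h : ∀ x ∈ S, ∀ y ∈ S, y - x ≤ r) :
    ∃ c d, d - c ≤ 2 * r ∧ S ⊆ Icc c d := by
  rcases S.eq_empty_or_nonempty with rfl | ⟨s, hs⟩
  · exact ⟨0, 2 * r, by simp, empty_subset _⟩
  · exact ⟨s - r, s + r, by linarith,
      fun x hx => ⟨by linarith [h x hx s hs], by linarith [h s hs x hx]⟩⟩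

theorem mobius_distortion_discrepancy_general (g₁ g₂ : SL2) (x₀ x₁ : ℝ)
    (hpole₁ : ∀ x ∈ Icc x₀ x₁, g₁ 1 0 * x + g₁ 1 1 ≠ 0)
    (hpole₂ : ∀ x ∈ Icc x₀ x₁, g₂ 1 0 * x + g₂ 1 1 ≠ 0)
    (l₀ l₁ : ℝ)
    (hα : alphaDist g₁ x₀ x₁ ≠ alphaDist g₂ x₀ x₁) :
    ∃ c d : ℝ,
      d - c ≤ Real.exp (|alphaDist g₁ x₀ x₁| + |alphaDist g₂ x₀ x₁|) * (x₁ - x₀) * (l₁ - l₀) /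
        |alphaDist g₁ x₀ x₁ - alphaDist g₂ x₀ x₁| ∧
      {x ∈ Icc x₀ x₁ | Real.log (mobiusDeriv g₁ x / mobiusDeriv g₂ x) ∈ Icc l₀ l₁} ⊆
        Icc c d := by
  set B := Real.exp (|alphaDist g₁ x₀ x₁| + |alphaDist g₂ x₀ x₁|) * (x₁ - x₀) * (l₁ - l₀) /
    |alphaDist g₁ x₀ x₁ - alphaDist g₂ x₀ x₁| with hB
  set S := {x ∈ Icc x₀ x₁ | log (mobiusDeriv g₁ x / mobiusDeriv g₂ x) ∈ Icc l₀ l₁}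
  suffices h : ∀ x ∈ S, ∀ y ∈ S, y - x ≤ B / 2 by
    simpa only [mul_div_cancel₀ B two_ne_zero] using exists_Icc_of_forall_sub_le h
  rintro x ⟨hx, hxL⟩ y ⟨hy, hyL⟩
  have hα₀ : 0 < |alphaDist g₁ x₀ x₁ - alphaDist g₂ x₀ x₁| := abs_pos.2 (sub_ne_zero.2 hα)
  have hE : 0 ≤ exp (|alphaDist g₁ x₀ x₁| + |alphaDist g₂ x₀ x₁|) * (x₁ - x₀) :=
    mul_nonneg (exp_pos _).le (sub_nonneg.2 (hx.1.trans hx.2))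
  rcases le_or_gt y x with hyx | hxy
  · have : 0 ≤ B := div_nonneg (mul_nonneg hE (sub_nonneg.2 (hxL.1.trans hxL.2))) hα₀.le
    linarith
  · have hL : |log (mobiusDeriv g₁ y / mobiusDeriv g₂ y) -
        log (mobiusDeriv g₁ x / mobiusDeriv g₂ x)| ≤ l₁ - l₀ :=
      abs_sub_le_iff.2 ⟨by linarith [hyL.2, hxL.1], by linarith [hxL.2, hyL.1]⟩
    rw [hB, div_div, le_div_iff₀ (mul_pos hα₀ two_pos)]
    calc (y - x) * (|alphaDist g₁ x₀ x₁ - alphaDist g₂ x₀ x₁| * 2)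
        = 2 * |alphaDist g₁ x₀ x₁ - alphaDist g₂ x₀ x₁| * (y - x) := by ring
      _ ≤ _ := two_mul_abs_alphaDist_sub_mul_le hpole₁ hpole₂ hx hy hxy
      _ ≤ _ := mul_le_mul_of_nonneg_left hL hE

/-- **Transformations with different distortion factors have transversal derivatives.**
If `γ₁, γ₂ ∈ SL(2,ℝ)` map the compact interval `I = [x₀,x₁]` (containing no poles) onto
compact intervals `J₁, J₂ ⊂ ℝ`, and `α₁ := α(γ₁,I) ≠ α₂ := α(γ₂,I)`, then for any bounded
interval `L = [l₀,l₁]` the set `{x ∈ I : log(γ₁'(x)/γ₂'(x)) ∈ L}` is contained in an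
interval of length at most `e^{|α₁|+|α₂|}·|I|·|L| / |α₁ − α₂|`. -/
theorem mobius_distortion_discrepancy (g₁ g₂ : SL2) (x₀ x₁ : ℝ) (hI : x₀ < x₁)
    (hpole₁ : ∀ x ∈ Icc x₀ x₁, g₁ 1 0 * x + g₁ 1 1 ≠ 0)
    (hpole₂ : ∀ x ∈ Icc x₀ x₁, g₂ 1 0 * x + g₂ 1 1 ≠ 0)
    (y₀ y₁ z₀ z₁ : ℝ)
    (him₁ : mobius g₁ '' Icc x₀ x₁ = Icc y₀ y₁)
    (him₂ : mobius g₂ '' Icc x₀ x₁ = Icc z₀ z₁)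
    (l₀ l₁ : ℝ) (hL : l₀ ≤ l₁)
    (hα : alphaDist g₁ x₀ x₁ ≠ alphaDist g₂ x₀ x₁) :
    ∃ c d : ℝ,
      d - c ≤ Real.exp (|alphaDist g₁ x₀ x₁| + |alphaDist g₂ x₀ x₁|) * (x₁ - x₀) * (l₁ - l₀) /
        |alphaDist g₁ x₀ x₁ - alphaDist g₂ x₀ x₁| ∧
      {x ∈ Icc x₀ x₁ | Real.log (mobiusDeriv g₁ x / mobiusDeriv g₂ x) ∈ Icc l₀ l₁} ⊆
        Icc c d :=
  mobius_distortion_discrepancy_general g₁ g₂ x₀ x₁ hpole₁ hpole₂ l₀ l₁ hα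

end
end

section
/- There exists a constant C_Γ > 0, depending only on the Schottky data, such that for every word 𝐚 ∈ W and every letter b ∈ A with 𝐚 → b, the distortion factor of γ_𝐚 on the interval I_b satisfies |α(γ_𝐚, I_b)| ≤ C_Γ. -/
open MeasureTheory Set Real Pointwise

noncomputable section

/-- The derivative of the Möbius transformation in the ball model,
`|γ'(x)|_B = ((1+x²)/(1+γ(x)²)) γ'(x)`. -/
def mobiusDerivB (g : SL2) (x : ℝ) : ℝ :=
  ((1 + x ^ 2) / (1 + mobius g x ^ 2)) * mobiusDeriv g x

/-- The Möbius action of `SL(2,ℝ)` on `ℝ ∪ {∞}`. -/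
def mobiusOP (g : SL2) (x : OnePoint ℝ) : OnePoint ℝ :=
  Option.elim x
    (if g 1 0 = 0 then OnePoint.infty else ((g 0 0 / g 1 0 : ℝ) : OnePoint ℝ))
    (fun y => if g 1 0 * y + g 1 1 = 0 then OnePoint.infty
      else ((mobius g y : ℝ) : OnePoint ℝ))

/-- The letter `ā` paired with `a` in the alphabet `{1,…,2r}` (modelled by `Fin (2r)`). -/
def bar {r : ℕ} (a : Fin (2 * r)) : Fin (2 * r) :=
  if h : (a : ℕ) < r then ⟨(a : ℕ) + r, by omega⟩
  else ⟨(a : ℕ) - r, by have := a.isLt; omega⟩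

/-- Schottky data: `2r` disjoint compact intervals `I_a = [ξ₀ a, ξ₁ a]` on the real line and
transformations `γ_a ∈ SL(2,ℝ)` with `γ_ā = γ_a⁻¹` such that `γ_a` maps the complement (in
`ℝ ∪ {∞}`) of the interior of `I_ā` onto `I_a`. -/
structure SchottkyData (r : ℕ) where
  hr : 2 ≤ r
  ξ₀ : Fin (2 * r) → ℝ
  ξ₁ : Fin (2 * r) → ℝ
  hlt : ∀ a, ξ₀ a < ξ₁ a
  hdisj : ∀ a b, a ≠ b → Disjoint (Icc (ξ₀ a) (ξ₁ a)) (Icc (ξ₀ b) (ξ₁ b))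
  γ : Fin (2 * r) → SL2
  hinv : ∀ a, γ (bar a) = (γ a)⁻¹
  hmap : ∀ a, mobiusOP (γ a) ''
      (univ \ ((fun t : ℝ => (t : OnePoint ℝ)) '' Ioo (ξ₀ (bar a)) (ξ₁ (bar a))))
      = (fun t : ℝ => (t : OnePoint ℝ)) '' Icc (ξ₀ a) (ξ₁ a)

namespace SchottkyData

variable {r : ℕ}

/-- `l` is a word: no letter is followed by its bar. -/
def IsWord (_ : SchottkyData r) (l : List (Fin (2 * r))) : Prop :=
  l.Chain' fun p q => q ≠ bar p

/-- The group element `γ_𝐚 = γ_{a_1} ⋯ γ_{a_n}` of a word. -/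
def wordγ (S : SchottkyData r) (l : List (Fin (2 * r))) : SL2 :=
  (l.map S.γ).prod

/-- The interval `I_𝐚 = γ_{𝐚'}(I_{a_n})` of a nonempty word (and `∅` for the empty word). -/
def wordI (S : SchottkyData r) (l : List (Fin (2 * r))) : Set ℝ :=
  if h : l = [] then ∅
  else mobius (S.wordγ l.dropLast) '' Icc (S.ξ₀ (l.getLast h)) (S.ξ₁ (l.getLast h))

/-- The limit set `Λ_Γ = ⋂_n ⋃_{𝐚 ∈ W_n} I_𝐚`. -/
def limitSet (S : SchottkyData r) : Set ℝ :=
  ⋂ n : ℕ, ⋃ (l : List (Fin (2 * r))) (_ : S.IsWord l ∧ l.length = n + 1), S.wordI l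

/-- `μ` is the (δ-conformal) Patterson–Sullivan measure: a Borel probability measure
supported on the limit set satisfying the equivariance property under the group
generated by the Schottky transformations. -/
def IsPS (S : SchottkyData r) (δ : ℝ) (μ : Measure ℝ) : Prop :=
  IsProbabilityMeasure μ ∧ μ S.limitSetᶜ = 0 ∧
    ∀ g ∈ Subgroup.closure (Set.range S.γ), ∀ f : ℝ → ℝ, Measurable f →
      (∃ C, ∀ x, |f x| ≤ C) →
      ∫ x, f x ∂μ = ∫ x, f (mobius g x) * mobiusDerivB g x ^ δ ∂μ

/-- The partition `Z(τ) = {𝐚 ∈ W° : |I_𝐚| ≤ τ < |I_{𝐚'}|}` (with `|I_∅| = ∞`). -/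
def Zpart (S : SchottkyData r) (τ : ℝ) : Set (List (Fin (2 * r))) :=
  {l | S.IsWord l ∧ l ≠ [] ∧ (MeasureTheory.volume (S.wordI l)).toReal ≤ τ ∧
    (l.dropLast = [] ∨ τ < (MeasureTheory.volume (S.wordI l.dropLast)).toReal)}

end SchottkyData

/-- The length `|I|` of an interval `I ⊂ ℝ`. -/
def ivlen (I : Set ℝ) : ℝ := (MeasureTheory.volume I).toReal

/-- `𝐚 ⇝ 𝐛` : the last letter of `𝐚` equals the first letter of `𝐛`. -/
def chn {X : Type*} (l m : List X) : Prop :=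
  ∃ (h1 : l ≠ []) (h2 : m ≠ []), l.getLast h1 = m.head h2

/-- The center of an interval. -/
def ctr (I : Set ℝ) : ℝ := (sInf I + sSup I) / 2

end

noncomputable section

open MeasureTheory Set Real

/-!
If the word `𝐚` ends in the letter `a`, the pole `γ_𝐚⁻¹(∞)` lies in `I_ā`. Indeed,
`γ_𝐚⁻¹ = γ_ā γ_{𝐚'}⁻¹`, and by induction `γ_{𝐚'}⁻¹(∞)` is `∞` or lies in an interval `I_c̄`
disjoint from `I_a`; either way it lies outside the interior of `I_a`, which `γ_ā` maps into
`I_ā`. If moreover `𝐚 → b`, then `ā ≠ b`, so the pole ranges over the compact interval `I_ā`,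
disjoint from `I_b = [x₀, x₁]`, on which `q ↦ log ((q - x₁) / (q - x₀))` is continuous and hence
bounded. Taking the largest of these bounds over the finitely many pairs `ā ≠ b` gives `C_Γ`.
-/

open OnePoint

lemma mobiusOP_eq_smul (g : SL2) (x : OnePoint ℝ) : mobiusOP g x = (g : GL (Fin 2) ℝ) • x := by
  cases x with
  | infty => simp [smul_infty_eq_ite]; rfl
  | coe y => simp [smul_some_eq_ite]; rfl

lemma mobiusOP_mul (g h : SL2) (x : OnePoint ℝ) :
    mobiusOP (g * h) x = mobiusOP g (mobiusOP h x) := by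
  simp only [mobiusOP_eq_smul, map_mul, mul_smul]

lemma alphaDist_eq_log_of_mobiusOP_inv_infty {g : SL2} {q : ℝ} (hq : mobiusOP g⁻¹ ∞ = q)
    (x₀ x₁ : ℝ) : alphaDist g x₀ x₁ = Real.log ((q - x₁) / (q - x₀)) := by
  have hinv : ((g⁻¹ : SL2) : GL (Fin 2) ℝ) 1 0 = -g 1 0 ∧
      ((g⁻¹ : SL2) : GL (Fin 2) ℝ) 0 0 = g 1 1 := by
    rw [Matrix.SpecialLinearGroup.coe_GL_coe_matrix, Matrix.SpecialLinearGroup.coe_inv,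
      Matrix.adjugate_fin_two]
    simp
  rw [mobiusOP_eq_smul, smul_infty_eq_ite, hinv.1, hinv.2] at hq
  split_ifs at hq with hg
  · exact absurd hq.symm (coe_ne_infty q)
  have hpole : mobiusPole g = q := by
    rw [mobiusPole, ← coe_injective hq, div_neg, neg_div]
  rw [alphaDist, if_neg (neg_ne_zero.mp hg), hpole]

lemma exists_abs_log_div_sub_le {K : Set ℝ} (hK : IsCompact K) {x₀ x₁ : ℝ} (h₀ : x₀ ∉ K)
    (h₁ : x₁ ∉ K) : ∃ C, ∀ q ∈ K, |Real.log ((q - x₁) / (q - x₀))| ≤ C := by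
  have hne : ∀ {x}, x ∉ K → ∀ q ∈ K, q - x ≠ 0 := fun hx q hq h ↦
    hx (sub_eq_zero.mp h ▸ hq)
  refine hK.exists_bound_of_continuousOn (ContinuousOn.log ?_ ?_)
  · exact (continuousOn_id.sub continuousOn_const).div (continuousOn_id.sub continuousOn_const)
      (hne h₀)
  · exact fun q hq ↦ div_ne_zero (hne h₁ q hq) (hne h₀ q hq)

@[simp]
lemma bar_bar {r : ℕ} (a : Fin (2 * r)) : bar (bar a) = a := by
  have hval : ∀ x : Fin (2 * r), (bar x : ℕ) = if (x : ℕ) < r then x + r else x - r := by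
    intro x
    unfold bar
    split_ifs <;> rfl
  ext
  rw [hval, hval]
  split_ifs <;> omega

namespace SchottkyData

variable {r : ℕ} (S : SchottkyData r)

@[simp]
lemma wordγ_nil : S.wordγ [] = 1 := rfl

@[simp]
lemma wordγ_append_singleton (l : List (Fin (2 * r))) (a : Fin (2 * r)) :
    S.wordγ (l ++ [a]) = S.wordγ l * S.γ a := by
  simp [wordγ]

lemma mobiusOP_γ_mem_Icc {a : Fin (2 * r)} {p : OnePoint ℝ}
    (hp : ∀ t ∈ Ioo (S.ξ₀ (bar a)) (S.ξ₁ (bar a)), p ≠ t) :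
    ∃ t ∈ Icc (S.ξ₀ a) (S.ξ₁ a), mobiusOP (S.γ a) p = t := by
  have hmem : mobiusOP (S.γ a) p ∈ (fun t : ℝ ↦ (t : OnePoint ℝ)) '' Icc (S.ξ₀ a) (S.ξ₁ a) :=
    S.hmap a ▸ mem_image_of_mem _ ⟨mem_univ p, fun ⟨t, ht, htp⟩ ↦ hp t ht htp.symm⟩
  obtain ⟨t, ht, hpt⟩ := hmem
  exact ⟨t, ht, hpt.symm⟩

lemma exists_abs_log_div_sub_le_of_ne :
    ∃ C, ∀ a b : Fin (2 * r), a ≠ b → ∀ q ∈ Icc (S.ξ₀ a) (S.ξ₁ a),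
      |Real.log ((q - S.ξ₁ b) / (q - S.ξ₀ b))| ≤ C := by
  have hpair : ∀ a b : Fin (2 * r), ∃ C, a ≠ b → ∀ q ∈ Icc (S.ξ₀ a) (S.ξ₁ a),
      |Real.log ((q - S.ξ₁ b) / (q - S.ξ₀ b))| ≤ C := by
    intro a b
    by_cases hab : a = b
    · exact ⟨0, fun h ↦ absurd hab h⟩
    have hnot : ∀ x ∈ Icc (S.ξ₀ b) (S.ξ₁ b), x ∉ Icc (S.ξ₀ a) (S.ξ₁ a) := fun x hx hx' ↦
      Set.disjoint_left.mp (S.hdisj a b hab) hx' hx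
    obtain ⟨C, hC⟩ := exists_abs_log_div_sub_le isCompact_Icc
      (hnot _ (left_mem_Icc.mpr (S.hlt b).le)) (hnot _ (right_mem_Icc.mpr (S.hlt b).le))
    exact ⟨C, fun _ ↦ hC⟩
  choose C hC using hpair
  obtain ⟨M, hM⟩ := Finite.bddAbove_range fun p : Fin (2 * r) × Fin (2 * r) ↦ C p.1 p.2
  exact ⟨M, fun a b hab q hq ↦ (hC a b hab q hq).trans (hM ⟨(a, b), rfl⟩)⟩

variable {S}

lemma IsWord.append_singleton_append_singleton {l : List (Fin (2 * r))} {a b : Fin (2 * r)}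
    (hw : S.IsWord (l ++ [a] ++ [b])) : S.IsWord (l ++ [a]) ∧ b ≠ bar a := by
  rw [IsWord, List.append_assoc, List.singleton_append] at hw
  obtain ⟨hl, hab, -⟩ := List.isChain_append_cons_cons.mp hw
  exact ⟨hl, hab⟩

lemma IsWord.exists_mem_Icc_mobiusOP_inv_infty {l : List (Fin (2 * r))} {a : Fin (2 * r)}
    (hw : S.IsWord (l ++ [a])) :
    ∃ q ∈ Icc (S.ξ₀ (bar a)) (S.ξ₁ (bar a)), mobiusOP (S.wordγ (l ++ [a]))⁻¹ ∞ = q := by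
  induction l using List.reverseRecOn generalizing a with
  | nil =>
    rw [wordγ_append_singleton, wordγ_nil, one_mul, ← S.hinv a]
    exact S.mobiusOP_γ_mem_Icc fun t _ ↦ (coe_ne_infty t).symm
  | append_singleton l c ih =>
    obtain ⟨hw, hac⟩ := hw.append_singleton_append_singleton
    obtain ⟨p, hp, hpole⟩ := ih hw
    rw [wordγ_append_singleton, mul_inv_rev, ← S.hinv a, mobiusOP_mul, hpole]
    refine S.mobiusOP_γ_mem_Icc fun t ht hpt ↦ ?_
    rw [bar_bar] at ht
    exact Set.disjoint_left.mp (S.hdisj _ _ hac.symm) hp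
      (coe_injective hpt ▸ Ioo_subset_Icc_self ht)

end SchottkyData

/-- **Uniform bound on distortion factors:** there is `C_Γ > 0` depending only on the
Schottky data such that `|α(γ_𝐚, I_b)| ≤ C_Γ` for all words `𝐚` and letters `b` with
`𝐚 → b`. -/
theorem alpha_bound (r : ℕ) (S : SchottkyData r) :
    ∃ C > (0 : ℝ), ∀ (l : List (Fin (2 * r))) (b : Fin (2 * r)),
      S.IsWord (l ++ [b]) →
      |alphaDist (S.wordγ l) (S.ξ₀ b) (S.ξ₁ b)| ≤ C := by
  obtain ⟨C, hC⟩ := S.exists_abs_log_div_sub_le_of_ne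
  refine ⟨max C 1, by positivity, fun l b hw ↦ ?_⟩
  rcases l.eq_nil_or_concat' with rfl | ⟨l, a, rfl⟩
  · simp [alphaDist]
  obtain ⟨hw, hba⟩ := hw.append_singleton_append_singleton
  obtain ⟨q, hq, hpole⟩ := hw.exists_mem_Icc_mobiusOP_inv_infty
  rw [alphaDist_eq_log_of_mobiusOP_inv_infty hpole]
  exact (hC _ _ hba.symm q hq).trans (le_max_left _ _)

end
end
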